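/- arXiv:2504.11032 — 2 statements merged into one kernel-verified Lean document; each statement's English description precedes it below -/
import Mathlib

section
/- Let p be a prime, k ≥ 1, G = (ℤ/p^kℤ)³, and let K ≤ G be a subgroup such that G/K is generated by two elements. Then K contains an element of order p^k. -/
/-!
If no element of `K` had order `p ^ k`, then `p ^ (k - 1)` would kill `K`, so every coordinate of
every element of `K` would be divisible by `p`. Reduction mod `p` would then factor through `G ⧸ K`
and map it onto `(ℤ/pℤ)³`, a three-dimensional `𝔽_p`-vector space, which is not generated by the
images of two elements.
-/

open Module

theorem ZMod.cast_eq_zero_of_nsmul_eq_zero {a b : ℕ} (ha : a ≠ 0) [NeZero b] {x : ZMod (a * b)}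
    (hx : a • x = 0) : (x.cast : ZMod b) = 0 := by
  have : NeZero (a * b) := ⟨mul_ne_zero ha (NeZero.ne b)⟩
  have hdvd : a * b ∣ a * x.val := by
    rw [← ZMod.natCast_eq_zero_iff, Nat.cast_mul, ZMod.natCast_zmod_val, ← nsmul_eq_mul]
    exact hx
  rw [ZMod.cast_eq_val, ZMod.natCast_eq_zero_iff]
  exact Nat.dvd_of_mul_dvd_mul_left (Nat.pos_of_ne_zero ha) hdvd

theorem nsmul_prime_pow_eq_zero_of_addOrderOf_ne {M : Type*} [AddMonoid M] {p n : ℕ}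
    [Fact p.Prime] {x : M} (hx : p ^ (n + 1) • x = 0) (hord : addOrderOf x ≠ p ^ (n + 1)) :
    p ^ n • x = 0 :=
  not_not.1 fun h => hord (addOrderOf_eq_prime_pow h hx)

theorem AddSubgroup.closure_image_eq_top {A B : Type*} [AddGroup A] [AddGroup B] {f : A →+ B}
    (hf : Function.Surjective f) {s : Set A} (hs : AddSubgroup.closure s = ⊤) :
    AddSubgroup.closure (f '' s) = ⊤ := by
  rw [← AddMonoidHom.map_closure, hs, AddSubgroup.map_top_of_surjective f hf]

theorem finrank_le_card_of_addSubgroup_closure_eq_top {K V : Type*} [DivisionRing K]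
    [AddCommGroup V] [Module K V] {s : Finset V} (hs : AddSubgroup.closure (s : Set V) = ⊤) :
    finrank K V ≤ s.card := by
  have hspan : Submodule.span K (s : Set V) = ⊤ := by
    rw [eq_top_iff, ← Submodule.toAddSubgroup_le, Submodule.top_toAddSubgroup, ← hs]
    exact (AddSubgroup.closure_le _).2 Submodule.subset_span
  have := finrank_span_finset_le_card (R := K) s
  rwa [Set.finrank, hspan, finrank_top] at this

theorem ZMod.addSubgroup_closure_pair_ne_top {p : ℕ} [Fact p.Prime]
    (x y : ZMod p × ZMod p × ZMod p) : AddSubgroup.closure {x, y} ≠ ⊤ := by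
  intro h
  have h3 := finrank_le_card_of_addSubgroup_closure_eq_top (K := ZMod p) (s := {x, y})
    (by rwa [Finset.coe_pair])
  have h2 := Finset.card_le_two (a := x) (b := y)
  simp only [finrank_prod, finrank_self] at h3
  omega

theorem kernel_of_two_generated_quotient_contains_max_order_element_general
    (p k : ℕ) (hp : p.Prime)
    (K : AddSubgroup (ZMod (p ^ k) × ZMod (p ^ k) × ZMod (p ^ k)))
    (h2gen : ∃ x y : (ZMod (p ^ k) × ZMod (p ^ k) × ZMod (p ^ k)) ⧸ K,
      AddSubgroup.closure {x, y} = ⊤) :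
    ∃ g ∈ K, addOrderOf g = p ^ k := by
  obtain _ | n := k
  · exact ⟨0, K.zero_mem, by rw [addOrderOf_zero, pow_zero]⟩
  have : Fact p.Prime := ⟨hp⟩
  by_contra! hK
  have hdvd : p ∣ p ^ (n + 1) := dvd_pow_self p n.add_one_ne_zero
  let r := (ZMod.castHom hdvd (ZMod p)).toAddMonoidHom
  have hr : Function.Surjective r := ZMod.castHom_surjective hdvd
  let f := r.prodMap (r.prodMap r)
  have hf : Function.Surjective f := Prod.map_surjective.2 ⟨hr, Prod.map_surjective.2 ⟨hr, hr⟩⟩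
  have hKf : K ≤ f.ker := fun g hg => by
    have hpg : p ^ n • g = 0 := nsmul_prime_pow_eq_zero_of_addOrderOf_ne
      (ZModModule.char_nsmul_eq_zero (p ^ (n + 1)) g) (hK g hg)
    have hr_eq_zero {z : ZMod (p ^ (n + 1))} (hz : p ^ n • z = 0) : r z = 0 :=
      ZMod.cast_eq_zero_of_nsmul_eq_zero (pow_ne_zero n hp.ne_zero) hz
    simp only [Prod.ext_iff, Prod.smul_fst, Prod.smul_snd, Prod.fst_zero, Prod.snd_zero] at hpg
    exact Prod.ext (hr_eq_zero hpg.1) (Prod.ext (hr_eq_zero hpg.2.1) (hr_eq_zero hpg.2.2))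
  obtain ⟨x, y, hxy⟩ := h2gen
  have hF := AddSubgroup.closure_image_eq_top
    (QuotientAddGroup.lift_surjective_of_surjective K f hf hKf) hxy
  rw [Set.image_pair] at hF
  exact ZMod.addSubgroup_closure_pair_ne_top _ _ hF

theorem kernel_of_two_generated_quotient_contains_max_order_element
    (p k : ℕ) (hp : p.Prime) (hk : 1 ≤ k)
    (K : AddSubgroup (ZMod (p ^ k) × ZMod (p ^ k) × ZMod (p ^ k)))
    (h2gen : ∃ x y : (ZMod (p ^ k) × ZMod (p ^ k) × ZMod (p ^ k)) ⧸ K,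
      AddSubgroup.closure {x, y} = ⊤) :
    ∃ g ∈ K, addOrderOf g = p ^ k :=
  kernel_of_two_generated_quotient_contains_max_order_element_general p k hp K h2gen
end

section
/- Let p be a prime, k ≥ 1, G = (ℤ/p^kℤ)³, and let K₁, K₂ ≤ G be subgroups with K₁ ∩ K₂ = {0} such that both G/K₁ and G/K₂ are generated by two elements. Then G/K₁ ≅ ℤ/p^kℤ × ℤ/p^{b}ℤ for some 0 ≤ b ≤ k, i.e., G/K₁ contains an element of order p^k. -/
/-!
If no element of `G ⧸ K₁` had order `p ^ k`, then `p ^ (k - 1) • g ∈ K₁` for every `g`.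
Since `G ⧸ K₂` is generated by two elements of order at most `p ^ k`, it has at most `p ^ (2k)`
elements, fewer than `G`, so `K₂ ≠ 0` and `K₂` contains some `w ≠ 0` with `p • w = 0`.
In `(ℤ/p^kℤ)³` every such `w` is of the form `p ^ (k - 1) • g`, so `w ∈ K₁ ⊓ K₂ = ⊥`.
-/

namespace QuotientAddGroup

variable {A : Type*} [AddCommGroup A] {K : AddSubgroup A}

theorem nsmul_eq_zero_of_forall {N : ℕ} (h : ∀ a : A, N • a = 0) (x : A ⧸ K) : N • x = 0 := by
  obtain ⟨a, rfl⟩ := mk_surjective x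
  rw [← mk_nsmul, h, mk_zero]

theorem pow_nsmul_mem_of_forall_addOrderOf_ne {p n : ℕ} [Fact p.Prime]
    (hexp : ∀ a : A, p ^ (n + 1) • a = 0) (h : ∀ x : A ⧸ K, addOrderOf x ≠ p ^ (n + 1))
    (a : A) : p ^ n • a ∈ K := by
  by_contra ha
  refine h a (addOrderOf_eq_prime_pow ?_ ?_)
  · rwa [← mk_nsmul, eq_zero_iff]
  · rw [← mk_nsmul, hexp, mk_zero]

end QuotientAddGroup

namespace AddSubgroup

theorem card_le_addOrderOf_mul_addOrderOf_of_closure_pair_eq_top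
    {A : Type*} [AddCommGroup A] [Finite A] {x y : A}
    (h : closure {x, y} = ⊤) : Nat.card A ≤ addOrderOf x * addOrderOf y := by
  have hsup : zmultiples x ⊔ zmultiples y = ⊤ := by
    rwa [← Set.singleton_union, closure_union, ← zmultiples_eq_closure,
      ← zmultiples_eq_closure] at h
  have hsurj : Function.Surjective fun g : zmultiples x × zmultiples y => (g.1 : A) + g.2 := by
    intro a
    obtain ⟨u, v, huv⟩ := mem_sup'.mp (hsup ▸ mem_top a)
    exact ⟨(u, v), huv⟩
  simpa [Nat.card_prod, Nat.card_zmultiples] using Nat.card_le_card_of_surjective _ hsurj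

theorem ne_bot_of_card_quotient_lt {A : Type*} [AddGroup A] {K : AddSubgroup A} [K.Normal]
    (h : Nat.card (A ⧸ K) < Nat.card A) : K ≠ ⊥ := by
  rintro rfl
  exact h.ne (Nat.card_congr QuotientAddGroup.quotientBot.toEquiv)

end AddSubgroup

theorem exists_pow_nsmul_ne_zero_and_nsmul_eq_zero {A : Type*} [AddMonoid A] {p k : ℕ} {z : A}
    (hz : z ≠ 0) (hk : p ^ k • z = 0) : ∃ m, p ^ m • z ≠ 0 ∧ p • p ^ m • z = 0 := by
  obtain ⟨m, hm, hm1⟩ := Nat.exists_not_and_succ_of_not_zero_of_exists (p := fun m ↦ p ^ m • z = 0)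
    (by simpa using hz) ⟨k, hk⟩
  exact ⟨m, hm, by rwa [smul_smul, ← pow_succ']⟩

namespace ZMod

theorem exists_eq_pow_nsmul_of_nsmul_eq_zero {p n : ℕ} (hp : 0 < p)
    {a : ZMod (p ^ (n + 1))} (ha : p • a = 0) : ∃ b : ZMod (p ^ (n + 1)), a = p ^ n • b := by
  have : NeZero (p ^ (n + 1)) := ⟨by positivity⟩
  rw [← natCast_zmod_val a, nsmul_eq_mul, ← Nat.cast_mul, natCast_eq_zero_iff] at ha
  obtain ⟨c, hc⟩ : p ^ n ∣ a.val := Nat.dvd_of_mul_dvd_mul_left hp (by rwa [← pow_succ'])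
  exact ⟨c, by rw [← natCast_zmod_val a, hc, nsmul_eq_mul]; push_cast; rfl⟩

theorem prod_exists_eq_pow_nsmul_of_nsmul_eq_zero {p n : ℕ} (hp : 0 < p)
    {w : ZMod (p ^ (n + 1)) × ZMod (p ^ (n + 1)) × ZMod (p ^ (n + 1))} (hw : p • w = 0) :
    ∃ g, w = p ^ n • g := by
  obtain ⟨a, ha⟩ := exists_eq_pow_nsmul_of_nsmul_eq_zero hp congr(($hw).1)
  obtain ⟨b, hb⟩ := exists_eq_pow_nsmul_of_nsmul_eq_zero hp congr(($hw).2.1)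
  obtain ⟨c, hc⟩ := exists_eq_pow_nsmul_of_nsmul_eq_zero hp congr(($hw).2.2)
  exact ⟨(a, b, c), Prod.ext ha (Prod.ext hb hc)⟩

theorem prod_ne_bot_of_closure_pair_quotient_eq_top {N : ℕ} (hN : 1 < N)
    {K : AddSubgroup (ZMod N × ZMod N × ZMod N)} {x y : (ZMod N × ZMod N × ZMod N) ⧸ K}
    (h : AddSubgroup.closure {x, y} = ⊤) : K ≠ ⊥ := by
  have : NeZero N := ⟨by omega⟩
  have hord (z : _ ⧸ K) : addOrderOf z ≤ N :=
    addOrderOf_le_of_nsmul_eq_zero (by omega)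
      (QuotientAddGroup.nsmul_eq_zero_of_forall (ZModModule.char_nsmul_eq_zero N) z)
  refine AddSubgroup.ne_bot_of_card_quotient_lt ?_
  calc Nat.card (_ ⧸ K) ≤ addOrderOf x * addOrderOf y :=
        AddSubgroup.card_le_addOrderOf_mul_addOrderOf_of_closure_pair_eq_top h
    _ ≤ N * N := Nat.mul_le_mul (hord x) (hord y)
    _ < N * (N * N) := lt_mul_left (by positivity) hN
    _ = Nat.card (ZMod N × ZMod N × ZMod N) := by simp

end ZMod

theorem quotient_by_minimal_kernel_has_max_order_element_general
    (p k : ℕ) (hp : p.Prime) (hk : 1 ≤ k)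
    (K₁ K₂ : AddSubgroup (ZMod (p ^ k) × ZMod (p ^ k) × ZMod (p ^ k)))
    (hmin : K₁ ⊓ K₂ = ⊥)
    (h2 : ∃ x y : (ZMod (p ^ k) × ZMod (p ^ k) × ZMod (p ^ k)) ⧸ K₂,
      AddSubgroup.closure {x, y} = ⊤) :
    ∃ x : (ZMod (p ^ k) × ZMod (p ^ k) × ZMod (p ^ k)) ⧸ K₁,
      addOrderOf x = p ^ k := by
  have := Fact.mk hp
  obtain ⟨n, rfl⟩ : ∃ n, k = n + 1 := ⟨k - 1, by omega⟩
  obtain ⟨x, y, hxy⟩ := h2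
  have hK₂ : K₂ ≠ ⊥ :=
    ZMod.prod_ne_bot_of_closure_pair_quotient_eq_top (Nat.one_lt_pow n.succ_ne_zero hp.one_lt) hxy
  have hexp : ∀ g : ZMod (p ^ (n + 1)) × ZMod (p ^ (n + 1)) × ZMod (p ^ (n + 1)),
      p ^ (n + 1) • g = 0 := ZModModule.char_nsmul_eq_zero _
  by_contra! hno
  obtain ⟨z, hzK₂, hz⟩ := K₂.bot_or_exists_ne_zero.resolve_left hK₂
  obtain ⟨m, hm, hpm⟩ := exists_pow_nsmul_ne_zero_and_nsmul_eq_zero hz (hexp z)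
  obtain ⟨g, hg⟩ := ZMod.prod_exists_eq_pow_nsmul_of_nsmul_eq_zero hp.pos hpm
  have hmem : p ^ m • z ∈ K₁ ⊓ K₂ :=
    ⟨hg ▸ QuotientAddGroup.pow_nsmul_mem_of_forall_addOrderOf_ne hexp hno g, K₂.nsmul_mem hzK₂ _⟩
  exact hm (by simpa [hmin] using hmem)

theorem quotient_by_minimal_kernel_has_max_order_element
    (p k : ℕ) (hp : p.Prime) (hk : 1 ≤ k)
    (K₁ K₂ : AddSubgroup (ZMod (p ^ k) × ZMod (p ^ k) × ZMod (p ^ k)))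
    (hmin : K₁ ⊓ K₂ = ⊥)
    (h1 : ∃ x y : (ZMod (p ^ k) × ZMod (p ^ k) × ZMod (p ^ k)) ⧸ K₁,
      AddSubgroup.closure {x, y} = ⊤)
    (h2 : ∃ x y : (ZMod (p ^ k) × ZMod (p ^ k) × ZMod (p ^ k)) ⧸ K₂,
      AddSubgroup.closure {x, y} = ⊤) :
    ∃ x : (ZMod (p ^ k) × ZMod (p ^ k) × ZMod (p ^ k)) ⧸ K₁,
      addOrderOf x = p ^ k :=
  quotient_by_minimal_kernel_has_max_order_element_general p k hp hk K₁ K₂ hmin h2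
end
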